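/- arXiv:2111.15653 — 6 statements merged into one kernel-verified Lean document; each statement's English description precedes it below -/
import Mathlib

section
/- Let R be a polynomial ring over a field of characteristic 0 and I an ideal of R. Then for all positive integers n, m, the m-th differential power of the n-th differential power of I equals the (n+m−1)-th differential power of I: (I^⟨n⟩)^⟨m⟩ = I^⟨n+m−1⟩. -/
/-! Over a field of characteristic zero, a differential operator `P` of order `≤ s` on
`k[x_σ]` has the normal form `∑_{|β| ≤ s} g_β ∂^β`. Indeed, the matrix `(∂^β x^γ)` is triangular
(`∂^β x^γ = 0` unless `β ≤ γ`) with invertible diagonal entries `∂^γ x^γ = γ!`, so the `g_β` can be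
solved for recursively to make the normal form agree with `P` on all monomials of degree `≤ s`;
and an operator of order `≤ s` killing those monomials is zero. Consequently `r ∈ I^⟨n⟩` iff
`∂^β r ∈ I` for all `|β| ≤ n - 1`. As `∂^(β₁ + β₂) = ∂^β₁ ∂^β₂` and every `β` with
`|β| ≤ (n - 1) + (m - 1)` splits as `β₁ + β₂` with `|β₁| ≤ n - 1` and `|β₂| ≤ m - 1`,
both `(I^⟨n⟩)^⟨m⟩` and `I^⟨n+m-1⟩` are cut out by the same conditions. -/

/-- `IsDiffOp A n φ` says that the `A`-linear endomorphism `φ` of `R` is an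
`A`-linear differential operator of order at most `n`. -/
def IsDiffOp (A : Type*) {R : Type*} [CommRing A] [CommRing R] [Algebra A R] :
    ℕ → (R →ₗ[A] R) → Prop
  | 0 => fun φ => ∃ r : R, φ = LinearMap.mulLeft A r
  | n + 1 => fun φ => ∀ a : R,
      IsDiffOp A n (φ ∘ₗ LinearMap.mulLeft A a - LinearMap.mulLeft A a ∘ₗ φ)

theorem isDiffOp_comp_mulLeft (A : Type*) {R : Type*} [CommRing A] [CommRing R]
    [Algebra A R] (x : R) (n : ℕ) :
    ∀ φ : R →ₗ[A] R, IsDiffOp A n φ → IsDiffOp A n (φ ∘ₗ LinearMap.mulLeft A x) := by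
  induction n with
  | zero =>
    rintro φ ⟨r, rfl⟩
    exact ⟨r * x, by ext y; simp [mul_assoc]⟩
  | succ n ih =>
    intro φ h a
    have h2 := ih _ (h a)
    have key : (φ ∘ₗ LinearMap.mulLeft A x) ∘ₗ LinearMap.mulLeft A a -
        LinearMap.mulLeft A a ∘ₗ (φ ∘ₗ LinearMap.mulLeft A x) =
        (φ ∘ₗ LinearMap.mulLeft A a - LinearMap.mulLeft A a ∘ₗ φ) ∘ₗ LinearMap.mulLeft A x := by
      ext y
      simp [mul_left_comm]
    rw [key]
    exact h2

/-- The `n`-th differential power of an ideal `I` of the `A`-algebra `R`: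
the set of `r ∈ R` such that `∂ r ∈ I` for every `A`-linear differential
operator `∂` of order at most `n - 1`. -/
def diffPow (A : Type*) {R : Type*} [CommRing A] [CommRing R] [Algebra A R]
    (n : ℕ) (I : Ideal R) : Ideal R where
  carrier := {r | ∀ φ : R →ₗ[A] R, IsDiffOp A (n - 1) φ → φ r ∈ I}
  add_mem' := fun hx hy φ hφ => by simp [map_add]; exact I.add_mem (hx φ hφ) (hy φ hφ)
  zero_mem' := fun φ _ => by simpa using I.zero_mem
  smul_mem' := fun c x hx => by
    intro φ hφ
    have := hx (φ ∘ₗ LinearMap.mulLeft A c) (isDiffOp_comp_mulLeft A c _ φ hφ)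
    simpa [smul_eq_mul] using this


namespace IsDiffOp

variable {A R : Type*} [CommRing A] [CommRing R] [Algebra A R]

local notation "μ" => LinearMap.mulLeft A

theorem succ_iff {n : ℕ} {φ : R →ₗ[A] R} :
    IsDiffOp A (n + 1) φ ↔ ∀ a : R, IsDiffOp A n (φ ∘ₗ μ a - μ a ∘ₗ φ) :=
  Iff.rfl

theorem mulLeft_comp_sub_comm (r a : R) : μ r ∘ₗ μ a - μ a ∘ₗ μ r = 0 := by
  ext; simp [mul_left_comm]

theorem mulLeft (r : R) : IsDiffOp A 0 (μ r) :=
  ⟨r, rfl⟩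

theorem zero (n : ℕ) : IsDiffOp A n (0 : R →ₗ[A] R) := by
  induction n with
  | zero => exact ⟨0, by simp⟩
  | succ n ih => exact succ_iff.2 fun a => by simpa using ih

theorem succ {n : ℕ} {φ : R →ₗ[A] R} (h : IsDiffOp A n φ) : IsDiffOp A (n + 1) φ := by
  induction n generalizing φ with
  | zero =>
    obtain ⟨r, rfl⟩ := h
    exact succ_iff.2 fun a => by rw [mulLeft_comp_sub_comm]; exact zero 0
  | succ n ih => exact fun a => ih (h a)

theorem mono {n n' : ℕ} (hn : n ≤ n') {φ : R →ₗ[A] R} (h : IsDiffOp A n φ) :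
    IsDiffOp A n' φ := by
  induction hn with
  | refl => exact h
  | step _ ih => exact ih.succ

theorem add {n : ℕ} {φ ψ : R →ₗ[A] R} (hφ : IsDiffOp A n φ) (hψ : IsDiffOp A n ψ) :
    IsDiffOp A n (φ + ψ) := by
  induction n generalizing φ ψ with
  | zero =>
    obtain ⟨r, rfl⟩ := hφ
    obtain ⟨s, rfl⟩ := hψ
    exact ⟨r + s, by ext; simp [add_mul]⟩
  | succ n ih =>
    refine succ_iff.2 fun a => ?_
    rw [LinearMap.add_comp, LinearMap.comp_add, add_sub_add_comm]
    exact ih (hφ a) (hψ a)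

theorem neg {n : ℕ} {φ : R →ₗ[A] R} (hφ : IsDiffOp A n φ) : IsDiffOp A n (-φ) := by
  induction n generalizing φ with
  | zero =>
    obtain ⟨r, rfl⟩ := hφ
    exact ⟨-r, by ext; simp⟩
  | succ n ih =>
    refine succ_iff.2 fun a => ?_
    rw [LinearMap.neg_comp, LinearMap.comp_neg, neg_sub_neg, ← neg_sub]
    exact ih (hφ a)

theorem sub {n : ℕ} {φ ψ : R →ₗ[A] R} (hφ : IsDiffOp A n φ) (hψ : IsDiffOp A n ψ) :
    IsDiffOp A n (φ - ψ) := by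
  simpa only [sub_eq_add_neg] using hφ.add hψ.neg

theorem sum {n : ℕ} {ι : Type*} (s : Finset ι) {φ : ι → R →ₗ[A] R}
    (h : ∀ i ∈ s, IsDiffOp A n (φ i)) : IsDiffOp A n (∑ i ∈ s, φ i) :=
  Finset.sum_induction φ _ (fun _ _ => add) (zero n) h

theorem comp : ∀ {p q : ℕ} {φ ψ : R →ₗ[A] R},
    IsDiffOp A p φ → IsDiffOp A q ψ → IsDiffOp A (p + q) (φ ∘ₗ ψ)
  | _, 0, φ, _, hφ, ⟨s, rfl⟩ => isDiffOp_comp_mulLeft A s _ φ hφ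
  | p, q + 1, φ, ψ, hφ, hψ => succ_iff.2 fun a => by
    have leibniz : (φ ∘ₗ ψ) ∘ₗ μ a - μ a ∘ₗ φ ∘ₗ ψ =
        φ ∘ₗ (ψ ∘ₗ μ a - μ a ∘ₗ ψ) + (φ ∘ₗ μ a - μ a ∘ₗ φ) ∘ₗ ψ := by
      ext; simp
    rw [leibniz]
    refine (comp hφ (hψ a)).add ?_
    match p, hφ with
    | 0, ⟨r, hr⟩ => rw [hr, mulLeft_comp_sub_comm, LinearMap.zero_comp]; exact zero _
    | p + 1, hφ => exact (comp (hφ a) hψ).mono (by omega)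

end IsDiffOp

namespace Finsupp

variable {σ : Type*}

theorem induction_single_one {motive : (σ →₀ ℕ) → Prop} (β : σ →₀ ℕ) (zero : motive 0)
    (single_one_add : ∀ i β, motive β → motive (single i 1 + β)) : motive β := by
  induction β using Finsupp.induction with
  | zero => exact zero
  | single_add i n β _ _ ih =>
    clear * - ih single_one_add
    induction n with
    | zero => simpa using ih
    | succ n ihn =>
      rw [single_add, add_comm (single i n), add_assoc]
      exact single_one_add i _ ihn

theorem degree_strictMono : StrictMono (degree : (σ →₀ ℕ) → ℕ) := fun β γ h => by
  obtain ⟨δ, rfl⟩ := le_iff_exists_add.mp h.le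
  have hδ : δ ≠ 0 := by rintro rfl; simp at h
  rwa [map_add, lt_add_iff_pos_right, pos_iff_ne_zero, Ne, degree_eq_zero_iff]

theorem exists_add_eq_of_degree_le_add {β : σ →₀ ℕ} {a b : ℕ} (h : β.degree ≤ a + b) :
    ∃ β₁ β₂ : σ →₀ ℕ, β₁ + β₂ = β ∧ β₁.degree ≤ a ∧ β₂.degree ≤ b := by
  obtain ⟨β₁, hle, hdeg⟩ := exists_le_degree_eq β (min a β.degree) (min_le_right _ _)
  obtain ⟨β₂, rfl⟩ := le_iff_exists_add.mp hle
  refine ⟨β₁, β₂, rfl, by omega, ?_⟩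
  rw [map_add] at h hdeg
  omega

end Finsupp

namespace MvPolynomial

section CommRing

variable {k σ : Type*} [CommRing k]

theorem commute_pderiv (i j : σ) :
    Commute (pderiv (R := k) i).toLinearMap (pderiv j).toLinearMap := by
  rw [commute_iff_lie_eq, ← Derivation.commutator_coe_linear_map]
  suffices h : ⁅pderiv i, pderiv j⁆ = (0 : Derivation k (MvPolynomial σ k) (MvPolynomial σ k)) by
    rw [h]; rfl
  refine derivation_ext fun l => ?_
  classical
  simp [Derivation.commutator_apply, pderiv_X, Pi.single_apply, apply_ite]

noncomputable def iteratedPDeriv (β : σ →₀ ℕ) : Module.End k (MvPolynomial σ k) :=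
  (β.toMultiset.map fun i => (pderiv i).toLinearMap).noncommProd <| by
    rintro _ hx _ hy -
    obtain ⟨i, -, rfl⟩ := Multiset.mem_map.1 hx
    obtain ⟨j, -, rfl⟩ := Multiset.mem_map.1 hy
    exact commute_pderiv i j

@[simp]
theorem iteratedPDeriv_zero : iteratedPDeriv (0 : σ →₀ ℕ) = (LinearMap.id : Module.End k _) := by
  simp [iteratedPDeriv]; rfl

theorem iteratedPDeriv_add (β γ : σ →₀ ℕ) :
    (iteratedPDeriv (β + γ) : Module.End k (MvPolynomial σ k)) =
      iteratedPDeriv β ∘ₗ iteratedPDeriv γ := by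
  simp only [iteratedPDeriv, Finsupp.toMultiset_add, Multiset.map_add]
  exact Multiset.noncommProd_add _ _ _

theorem iteratedPDeriv_single (i : σ) :
    (iteratedPDeriv (Finsupp.single i 1) : Module.End k (MvPolynomial σ k)) =
      (pderiv i).toLinearMap := by
  simp [iteratedPDeriv, Finsupp.toMultiset_single, ← Multiset.cons_zero,
    Multiset.noncommProd_cons]

theorem isDiffOp_pderiv (i : σ) : IsDiffOp k 1 (pderiv (R := k) i).toLinearMap := fun a =>
  ⟨pderiv i a, LinearMap.ext fun f => by simp [mul_comm]⟩

theorem isDiffOp_iteratedPDeriv (β : σ →₀ ℕ) :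
    IsDiffOp k β.degree (iteratedPDeriv β : Module.End k (MvPolynomial σ k)) := by
  induction β using Finsupp.induction_single_one with
  | zero => exact ⟨1, by ext; simp⟩
  | single_one_add i β ih =>
    rw [iteratedPDeriv_add, iteratedPDeriv_single, map_add, Finsupp.degree_single]
    exact (isDiffOp_pderiv i).comp ih

theorem iteratedPDeriv_monomial [Fintype σ] (β γ : σ →₀ ℕ) (c : k) :
    iteratedPDeriv β (monomial γ c) =
      monomial (γ - β) (c * ((∏ j, (γ j).descFactorial (β j) : ℕ) : k)) := by
  induction β using Finsupp.induction_single_one with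
  | zero => simp
  | single_one_add i β ih =>
    classical
    have hprod : ∏ j, (γ j).descFactorial ((Finsupp.single i 1 + β : σ →₀ ℕ) j) =
        (γ i - β i) * ∏ j, (γ j).descFactorial (β j) := by
      rw [← Fintype.prod_pi_mulSingle' i (γ i - β i), ← Finset.prod_mul_distrib]
      refine Finset.prod_congr rfl fun j _ => ?_
      rcases eq_or_ne j i with rfl | hj
      · simp [Nat.descFactorial_succ, add_comm 1]
      · simp [hj]
    rw [iteratedPDeriv_add, iteratedPDeriv_single, LinearMap.comp_apply, ih, Derivation.coeFn_coe,
      pderiv_monomial, tsub_tsub, add_comm β, hprod, Finsupp.tsub_apply]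
    congr 1
    push_cast
    ring

theorem _root_.IsDiffOp.eq_zero_of_apply_monomial {s : ℕ} {P : Module.End k (MvPolynomial σ k)}
    (hP : IsDiffOp k s P) (h : ∀ γ : σ →₀ ℕ, γ.degree ≤ s → P (monomial γ 1) = 0) : P = 0 := by
  induction s generalizing P with
  | zero =>
    obtain ⟨r, rfl⟩ := hP
    obtain rfl : r = 0 := by simpa using h 0 le_rfl
    ext; simp
  | succ s ih =>
    have hX (i : σ) : P ∘ₗ LinearMap.mulLeft k (X i) - LinearMap.mulLeft k (X i) ∘ₗ P = 0 := by
      refine ih (hP (X i)) fun γ hγ => ?_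
      have hXγ : X i * monomial γ (1 : k) = monomial (γ + Finsupp.single i 1) 1 := by
        rw [X, monomial_mul, one_mul, add_comm]
      simp only [LinearMap.sub_apply, LinearMap.comp_apply, LinearMap.mulLeft_apply]
      rw [hXγ, h _ (by rw [map_add, Finsupp.degree_single]; omega), h γ (by omega), mul_zero,
        sub_zero]
    -- `P` commutes with multiplication by every `X i`, hence is multiplication by `P 1`.
    have hmul (f : MvPolynomial σ k) : P f = f * P 1 := by
      induction f using MvPolynomial.induction_on with
      | C a => rw [C_eq_smul_one, map_smul, smul_mul_assoc, one_mul]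
      | add f g hf hg => rw [map_add, hf, hg, add_mul]
      | mul_X f i hf =>
        have := congrArg (· f) (hX i)
        simp only [LinearMap.sub_apply, LinearMap.comp_apply, LinearMap.mulLeft_apply,
          LinearMap.zero_apply, sub_eq_zero] at this
        rw [mul_comm, this, hf, mul_assoc]
    refine LinearMap.ext fun f => ?_
    rw [hmul, one_def, h 0 (by simp), mul_zero, LinearMap.zero_apply]

end CommRing

section Field

variable {k σ : Type*} [Field k] [Fintype σ]

theorem iteratedPDeriv_monomial_of_not_le {β γ : σ →₀ ℕ} (h : ¬β ≤ γ) (c : k) :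
    iteratedPDeriv β (monomial γ c) = 0 := by
  obtain ⟨j, hj⟩ : ∃ j, γ j < β j := by simpa [Finsupp.le_def] using h
  rw [iteratedPDeriv_monomial, Finset.prod_eq_zero (Finset.mem_univ j)
    (Nat.descFactorial_eq_zero_iff_lt.2 hj), Nat.cast_zero, mul_zero, monomial_zero]

theorem iteratedPDeriv_monomial_self (γ : σ →₀ ℕ) (c : k) :
    iteratedPDeriv γ (monomial γ c) = C (c * ∏ j, ((γ j).factorial : k)) := by
  simp [iteratedPDeriv_monomial, Nat.descFactorial_self]

section NormalForm

variable [DecidableEq σ]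

noncomputable def diffOpCoeff (P : Module.End k (MvPolynomial σ k)) (γ : σ →₀ ℕ) :
    MvPolynomial σ k :=
  C (∏ j, ((γ j).factorial : k))⁻¹ *
    (P (monomial γ 1) - ∑ β ∈ (Finset.Iio γ).attach,
      diffOpCoeff P β * iteratedPDeriv β.1 (monomial γ 1))
termination_by γ.degree
decreasing_by exact Finsupp.degree_strictMono (Finset.mem_Iio.1 β.2)

theorem sum_diffOpCoeff_mul_iteratedPDeriv [CharZero k] (P : Module.End k (MvPolynomial σ k))
    (γ : σ →₀ ℕ) :
    ∑ β ∈ Finset.Iic γ, diffOpCoeff P β * iteratedPDeriv β (monomial γ 1) = P (monomial γ 1) := by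
  have hfact : (∏ j, ((γ j).factorial : k)) ≠ 0 :=
    Finset.prod_ne_zero_iff.2 fun j _ => Nat.cast_ne_zero.2 (Nat.factorial_ne_zero _)
  rw [← Finset.Iio_insert, Finset.sum_insert Finset.notMem_Iio_self,
    iteratedPDeriv_monomial_self, one_mul, diffOpCoeff, mul_comm, ← mul_assoc, ← C_mul,
    mul_inv_cancel₀ hfact, C_1, one_mul,
    Finset.sum_attach (Finset.Iio γ) fun β => diffOpCoeff P β * iteratedPDeriv β (monomial γ 1),
    sub_add_cancel]

noncomputable def diffOpNormalForm (s : ℕ) (P : Module.End k (MvPolynomial σ k)) :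
    Module.End k (MvPolynomial σ k) :=
  ∑ β ∈ (Finsupp.finite_of_degree_le s).toFinset,
    LinearMap.mulLeft k (diffOpCoeff P β) ∘ₗ iteratedPDeriv β

theorem isDiffOp_diffOpNormalForm (s : ℕ) (P : Module.End k (MvPolynomial σ k)) :
    IsDiffOp k s (diffOpNormalForm s P) :=
  IsDiffOp.sum _ fun β hβ =>
    ((IsDiffOp.mulLeft _).comp (isDiffOp_iteratedPDeriv β)).mono (by simpa using hβ)

theorem diffOpNormalForm_monomial [CharZero k] {s : ℕ} (P : Module.End k (MvPolynomial σ k))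
    {γ : σ →₀ ℕ} (hγ : γ.degree ≤ s) :
    diffOpNormalForm s P (monomial γ 1) = P (monomial γ 1) := by
  rw [diffOpNormalForm, LinearMap.sum_apply, ← sum_diffOpCoeff_mul_iteratedPDeriv P γ]
  refine (Finset.sum_subset (fun β hβ => ?_) fun β _ hβ => ?_).symm
  · simpa using (Finsupp.degree_mono (Finset.mem_Iic.1 hβ)).trans hγ
  · rw [LinearMap.comp_apply, iteratedPDeriv_monomial_of_not_le (by simpa using hβ), map_zero]

theorem _root_.IsDiffOp.eq_diffOpNormalForm [CharZero k] {s : ℕ}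
    {P : Module.End k (MvPolynomial σ k)} (hP : IsDiffOp k s P) : P = diffOpNormalForm s P :=
  sub_eq_zero.1 <| (hP.sub (isDiffOp_diffOpNormalForm s P)).eq_zero_of_apply_monomial
    fun γ hγ => by rw [LinearMap.sub_apply, diffOpNormalForm_monomial P hγ, sub_self]

end NormalForm

theorem mem_diffPow_iff [CharZero k] {n : ℕ} {I : Ideal (MvPolynomial σ k)}
    {r : MvPolynomial σ k} :
    r ∈ diffPow k n I ↔ ∀ β : σ →₀ ℕ, β.degree ≤ n - 1 → iteratedPDeriv β r ∈ I := by
  refine ⟨fun h β hβ => h _ ((isDiffOp_iteratedPDeriv β).mono hβ), fun h φ hφ => ?_⟩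
  classical
  rw [hφ.eq_diffOpNormalForm, diffOpNormalForm, LinearMap.sum_apply]
  exact I.sum_mem fun β hβ => I.mul_mem_left _ (h β (by simpa using hβ))

end Field

end MvPolynomial

/-- `(I^⟨n⟩)^⟨m⟩ = I^⟨n+m-1⟩` for ideals in a polynomial ring over a field of
characteristic zero. -/
theorem diffPow_diffPow {k : Type*} [Field k] [CharZero k] {d : ℕ}
    (I : Ideal (MvPolynomial (Fin d) k)) (n m : ℕ) (hn : 0 < n) (hm : 0 < m) :
    diffPow k m (diffPow k n I) = diffPow k (n + m - 1) I := by
  ext r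
  simp only [MvPolynomial.mem_diffPow_iff]
  rw [show n + m - 1 - 1 = (n - 1) + (m - 1) by omega]
  constructor
  · intro h β hβ
    obtain ⟨β₁, β₂, rfl, h₁, h₂⟩ := Finsupp.exists_add_eq_of_degree_le_add hβ
    rw [MvPolynomial.iteratedPDeriv_add]
    exact h β₂ h₂ β₁ h₁
  · intro h β₂ h₂ β₁ h₁
    rw [← LinearMap.comp_apply, ← MvPolynomial.iteratedPDeriv_add]
    exact h _ (by rw [map_add]; omega)
end

section
/- Let I ⊆ k[x,y] be a non-principal monomial ideal with minimal monomial generators x^{β_{11}}y^{β_{12}},...,x^{β_{m1}}y^{β_{m2}} ordered so that β_{11} < ··· < β_{m1} and β_{12} > ··· > β_{m2}, and let i be an index maximizing β_{(i+1)1} + β_{i2} over 1 ≤ j < m. If a, b are nonnegative integers with a + b ≥ β_{(i+1)1} + β_{i2} − 1, a ≥ β_{11}, and b ≥ β_{m2}, then x^a y^b ∈ I. -/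
theorem Nat.exists_and_of_forall_lt_or {P Q : ℕ → Prop} {n : ℕ} (h0 : P 0) (hn : Q n)
    (hstep : ∀ j < n, P (j + 1) ∨ Q j) : ∃ j ≤ n, P j ∧ Q j := by
  induction n with
  | zero => exact ⟨0, le_rfl, h0, hn⟩
  | succ n ih =>
    rcases hstep n n.lt_succ_self with hP | hQ
    · exact ⟨n + 1, le_rfl, hP, hn⟩
    · obtain ⟨j, hjn, hj⟩ := ih hQ fun j hj => hstep j (Nat.lt_succ_of_lt hj)
      exact ⟨j, Nat.le_succ_of_le hjn, hj⟩

theorem pow_mul_pow_mem_span_range_of_le {R ι : Type*} [CommSemiring R] (x y : R)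
    (e f : ι → ℕ) {a b : ℕ} (j : ι) (ha : e j ≤ a) (hb : f j ≤ b) :
    x ^ a * y ^ b ∈ Ideal.span (Set.range fun j => x ^ e j * y ^ f j) :=
  Ideal.mem_of_dvd _ (mul_dvd_mul (pow_dvd_pow x ha) (pow_dvd_pow y hb))
    (Ideal.subset_span ⟨j, rfl⟩)

/-- If `a + b ≥ β_{(i+1)1} + β_{i2} − 1`, `a ≥ β_{11}` and `b ≥ β_{m2}`,
then `x^a y^b ∈ I`, for `I` a non-principal monomial ideal of `k[x,y]` with
generators ordered as in the paper and `i` an index maximizing `β_{(j+1)1} + β_{j2}`. -/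
theorem monomial_mem_of_degree {k : Type*} [Field k] {m : ℕ}
    (β1 β2 : Fin m → ℕ)
    (i : Fin m) (hi : (i : ℕ) + 1 < m)
    (himax : ∀ j : Fin m, ∀ hj : (j : ℕ) + 1 < m,
      β1 ⟨(j : ℕ) + 1, hj⟩ + β2 j ≤ β1 ⟨(i : ℕ) + 1, hi⟩ + β2 i)
    (a b : ℕ)
    (hab : β1 ⟨(i : ℕ) + 1, hi⟩ + β2 i ≤ a + b + 1)
    (ha : β1 ⟨0, by omega⟩ ≤ a) (hb : β2 ⟨m - 1, by omega⟩ ≤ b) :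
    (MvPolynomial.X 0 : MvPolynomial (Fin 2) k) ^ a * MvPolynomial.X 1 ^ b ∈
      Ideal.span (Set.range fun j : Fin m =>
        (MvPolynomial.X 0 : MvPolynomial (Fin 2) k) ^ β1 j * MvPolynomial.X 1 ^ β2 j) := by
  -- By `himax` and `hab`, whenever `a < β1 (j + 1)` we get `β2 j ≤ b`, so walking from the
  -- first generator (`ha`) to the last (`hb`) we meet one dividing `x^a y^b`.
  obtain ⟨j, -, ⟨hjm, hj1⟩, _, hj2⟩ :=
    Nat.exists_and_of_forall_lt_or (n := m - 1)
      (P := fun j => ∃ hj : j < m, β1 ⟨j, hj⟩ ≤ a) (Q := fun j => ∃ hj : j < m, β2 ⟨j, hj⟩ ≤ b)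
      ⟨_, ha⟩ ⟨_, hb⟩ fun j hj => by
        have hjs : j + 1 < m := by omega
        have hgap : β1 ⟨j + 1, hjs⟩ + β2 ⟨j, by omega⟩ ≤ β1 ⟨i + 1, hi⟩ + β2 i :=
          himax ⟨j, _⟩ hjs
        by_cases hP : β1 ⟨j + 1, hjs⟩ ≤ a
        · exact .inl ⟨hjs, hP⟩
        · exact .inr ⟨by omega, by omega⟩
  exact pow_mul_pow_mem_span_range_of_le _ _ β1 β2 ⟨j, hjm⟩ hj1 hj2
end

section
/- Let R = k[x_1,...,x_d] with k of characteristic 0, α ∈ Z_{≥0}^d, and I = (x_i^{α_i} : i ∈ supp(α)). Fix a positive integer n and set c = min over ω ∈ Z_{≥0}^d with supp(ω) ⊆ supp(α) and |ω| = n of Σ_{i ∈ supp(ω)} (α_i − 1)(ω_i − 1). Then I^n ⊆ I^⟨n+c⟩. -/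
/-!
A differential operator of order at most `m` sends a monomial `x^γ` into the ideal spanned by
the monomials `x^δ` with `δ ≤ γ` and `|γ| - |δ| ≤ m`: for `m = 0` it is a multiplication, and
writing `x^(γ + eᵢ) = xᵢ · x^γ`, the operator splits as `[∂, xᵢ] + xᵢ ∂` with `[∂, xᵢ]` of order
`m - 1`. Now `I^n` is spanned by the monomials `x^(αω)` with `|ω| = n`, and a divisor `x^δ` of
`x^(αω)` with `δᵢ < αᵢ` for every `i ∈ supp ω` has degree at most
`|αω| - |ω| - ∑ (αᵢ - 1)(ωᵢ - 1) ≤ |αω| - (n + c)`. So an operator of order `n + c - 1` maps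
`x^(αω)` into the span of monomials divisible by some `xᵢ^αᵢ`, that is, into `I`.
-/

section

open MvPolynomial Finset

namespace Finsupp

@[elab_as_elim]
theorem induction_add_single_one {σ : Type*} {motive : (σ →₀ ℕ) → Prop} (f : σ →₀ ℕ)
    (zero : motive 0) (add_single : ∀ f i, motive f → motive (f + single i 1)) : motive f := by
  induction f using Finsupp.induction₂ with
  | zero => exact zero
  | add_single i b f _ _ ih =>
    clear * - ih add_single
    induction b with
    | zero => simpa using ih
    | succ b ihb => simpa [single_add, add_assoc] using add_single _ i ihb

end Finsupp

theorem Nat.add_add_sub_one_mul_sub_one_le_mul {a w e : ℕ} (he : e ≤ a * w) (h : w ≠ 0 → e < a) :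
    w + (a - 1) * (w - 1) + e ≤ a * w := by
  rcases w with _ | w
  · simpa using he
  · have := h w.succ_ne_zero
    obtain ⟨a, rfl⟩ : ∃ a', a = a' + 1 := ⟨a - 1, by omega⟩
    simp only [Nat.add_sub_cancel]
    nlinarith

theorem Finset.exists_ne_zero_le_of_sum_lt {ι : Type*} [Fintype ι] {α ω δ : ι → ℕ}
    (hsupp : ∀ i, ω i ≠ 0 → α i ≠ 0) (hδ : ∀ i, δ i ≤ α i * ω i)
    (h : ∑ i, α i * ω i < ∑ i, ω i + ∑ i, (α i - 1) * (ω i - 1) + ∑ i, δ i) :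
    ∃ i, α i ≠ 0 ∧ α i ≤ δ i := by
  by_contra! H
  refine h.not_ge ?_
  rw [← sum_add_distrib, ← sum_add_distrib]
  exact sum_le_sum fun i _ =>
    Nat.add_add_sub_one_mul_sub_one_le_mul (hδ i) fun hω => H i (hsupp i hω)

variable {k σ : Type*} [CommRing k]

noncomputable def divisorSpan (γ : σ →₀ ℕ) (m : ℕ) : Ideal (MvPolynomial σ k) :=
  Ideal.span ((fun δ => monomial δ 1) '' {δ | δ ≤ γ ∧ γ.degree ≤ δ.degree + m})

theorem monomial_mem_divisorSpan {γ δ : σ →₀ ℕ} {m : ℕ} (hle : δ ≤ γ)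
    (hdeg : γ.degree ≤ δ.degree + m) : (monomial δ 1 : MvPolynomial σ k) ∈ divisorSpan γ m :=
  Ideal.subset_span ⟨δ, ⟨hle, hdeg⟩, rfl⟩

theorem divisorSpan_le_add (γ e : σ →₀ ℕ) (m : ℕ) :
    (divisorSpan γ m : Ideal (MvPolynomial σ k)) ≤ divisorSpan (γ + e) (m + e.degree) := by
  refine Ideal.span_mono (Set.image_mono fun δ ⟨hle, hdeg⟩ => ⟨hle.trans le_self_add, ?_⟩)
  rw [map_add]
  omega

theorem monomial_mul_mem_divisorSpan {γ : σ →₀ ℕ} {m : ℕ} (e : σ →₀ ℕ) {p : MvPolynomial σ k}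
    (hp : p ∈ divisorSpan γ m) : monomial e 1 * p ∈ divisorSpan (γ + e) m := by
  suffices h : (divisorSpan γ m : Ideal (MvPolynomial σ k)) ≤
      Submodule.comap (LinearMap.mulLeft (MvPolynomial σ k) (monomial e 1))
        (divisorSpan (γ + e) m) from
    h hp
  refine Submodule.span_le.2 ?_
  rintro _ ⟨δ, ⟨hle, hdeg⟩, rfl⟩
  simp only [SetLike.mem_coe, Submodule.mem_comap, LinearMap.mulLeft_apply, monomial_mul,
    mul_one, add_comm e]
  refine monomial_mem_divisorSpan (add_le_add_left hle e) ?_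
  simp only [map_add]
  omega

theorem IsDiffOp.apply_monomial_mem_divisorSpan {m : ℕ}
    {φ : MvPolynomial σ k →ₗ[k] MvPolynomial σ k} (hφ : IsDiffOp k m φ) (γ : σ →₀ ℕ) :
    φ (monomial γ 1) ∈ divisorSpan γ m := by
  induction m generalizing φ γ with
  | zero =>
    obtain ⟨r, rfl⟩ := hφ
    exact Ideal.mul_mem_left _ r (monomial_mem_divisorSpan le_rfl (by omega))
  | succ m ih =>
    induction γ using Finsupp.induction_add_single_one with
    | zero =>
      rw [(Ideal.eq_top_iff_one _).2 (monomial_mem_divisorSpan le_rfl (by omega))]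
      trivial
    | add_single γ i ihγ =>
      have hsplit : φ (monomial (γ + Finsupp.single i 1) 1) =
          (φ ∘ₗ LinearMap.mulLeft k (X i) - LinearMap.mulLeft k (X i) ∘ₗ φ) (monomial γ 1) +
            monomial (Finsupp.single i 1) 1 * φ (monomial γ 1) := by
        simp [X, monomial_mul, add_comm]
      rw [hsplit]
      refine add_mem ?_ (monomial_mul_mem_divisorSpan _ ihγ)
      simpa only [Finsupp.degree_single] using
        divisorSpan_le_add γ (Finsupp.single i 1) m (ih (hφ (X i)) γ)

theorem span_X_pow_pow_le [Fintype σ] (α : σ → ℕ) (n : ℕ) :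
    Ideal.span ((fun i => (X i : MvPolynomial σ k) ^ α i) '' {i | α i ≠ 0}) ^ n ≤
      Ideal.span ((fun β => monomial β 1) '' {β | ∃ ω : σ → ℕ, (∀ i, ω i ≠ 0 → α i ≠ 0) ∧
        ∑ i, ω i = n ∧ ∀ i, β i = α i * ω i}) := by
  classical
  induction n with
  | zero =>
    rw [pow_zero, Ideal.one_eq_top, top_le_iff, Ideal.eq_top_iff_one, one_def]
    exact Ideal.subset_span ⟨0, ⟨0, by simp⟩, rfl⟩
  | succ n ih =>
    rw [pow_succ]
    refine (Ideal.mul_mono_left ih).trans ?_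
    rw [Ideal.span_mul_span']
    refine Ideal.span_mono ?_
    rintro _ ⟨_, ⟨β, ⟨ω, hsupp, hsum, hβ⟩, rfl⟩, _, ⟨i, hi, rfl⟩, rfl⟩
    refine ⟨β + Finsupp.single i (α i), ⟨ω + Pi.single i 1, fun j hj => ?_, ?_, fun j => ?_⟩, ?_⟩
    · rcases eq_or_ne j i with rfl | hji
      · exact hi
      · exact hsupp j (by simpa [hji] using hj)
    · simp [sum_add_distrib, hsum]
    · rcases eq_or_ne j i with rfl | hji
      · simp [hβ, mul_add]
      · simp [hβ, hji]
    · simp [X_pow_eq_monomial, monomial_mul]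

theorem divisorSpan_le_span_X_pow [Fintype σ] {α ω : σ → ℕ} {β : σ →₀ ℕ} {m : ℕ}
    (hβ : ∀ i, β i = α i * ω i) (hsupp : ∀ i, ω i ≠ 0 → α i ≠ 0)
    (hm : m < ∑ i, ω i + ∑ i, (α i - 1) * (ω i - 1)) :
    (divisorSpan β m : Ideal (MvPolynomial σ k)) ≤
      Ideal.span ((fun i => (X i : MvPolynomial σ k) ^ α i) '' {i | α i ≠ 0}) := by
  refine Ideal.span_le.2 ?_
  rintro _ ⟨δ, ⟨hle, hdeg⟩, rfl⟩
  rw [Finsupp.degree_eq_sum, Finsupp.degree_eq_sum] at hdeg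
  simp only [hβ] at hdeg
  obtain ⟨i, hi, hαδ⟩ := exists_ne_zero_le_of_sum_lt hsupp (fun i => hβ i ▸ hle i) (by omega)
  have hδ : δ = Finsupp.single i (α i) + (δ - Finsupp.single i (α i)) :=
    (add_tsub_cancel_of_le (Finsupp.single_le_iff.2 hαδ)).symm
  change monomial δ 1 ∈ _
  rw [hδ, ← mul_one (1 : k), ← monomial_mul, ← X_pow_eq_monomial]
  exact Ideal.mul_mem_right _ _ (Ideal.subset_span ⟨i, hi, rfl⟩)

end

theorem pow_le_diffPow_add_general {k : Type*} [Field k] {d : ℕ}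
    (α : Fin d → ℕ) (n : ℕ) (hn : 0 < n)
    (I : Ideal (MvPolynomial (Fin d) k))
    (hI : I = Ideal.span
      ((fun i => (MvPolynomial.X i : MvPolynomial (Fin d) k) ^ α i) ''
        {i : Fin d | α i ≠ 0}))
    (c : ℕ)
    (hc : c = sInf {v : ℕ | ∃ ω : Fin d → ℕ, (∀ i, ω i ≠ 0 → α i ≠ 0) ∧
      (∑ i, ω i) = n ∧
      v = ∑ i ∈ Finset.univ.filter fun i => ω i ≠ 0, (α i - 1) * (ω i - 1)}) :
    I ^ n ≤ diffPow k (n + c) I := by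
  subst hI
  refine (span_X_pow_pow_le α n).trans (Ideal.span_le.2 ?_)
  rintro _ ⟨β, ⟨ω, hsupp, hsum, hβ⟩, rfl⟩ φ hφ
  have hc_le : c ≤ ∑ i, (α i - 1) * (ω i - 1) := by
    refine hc ▸ Nat.sInf_le ⟨ω, hsupp, hsum, (Finset.sum_filter_of_ne fun i _ h hω => ?_).symm⟩
    simp [hω] at h
  exact divisorSpan_le_span_X_pow hβ hsupp (by omega) (hφ.apply_monomial_mem_divisorSpan β)

/-- `I^n ⊆ I^⟨n+c⟩` where `c` is the minimum of `∑_{i ∈ supp ω}(α_i−1)(ω_i−1)` over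
`ω` with `supp ω ⊆ supp α` and `|ω| = n`, for the pure-power ideal
`I = (x_i^{α_i} : i ∈ supp α)`. -/
theorem pow_le_diffPow_add {k : Type*} [Field k] [CharZero k] {d : ℕ}
    (α : Fin d → ℕ) (n : ℕ) (hn : 0 < n)
    (I : Ideal (MvPolynomial (Fin d) k))
    (hI : I = Ideal.span
      ((fun i => (MvPolynomial.X i : MvPolynomial (Fin d) k) ^ α i) ''
        {i : Fin d | α i ≠ 0}))
    (c : ℕ)
    (hc : c = sInf {v : ℕ | ∃ ω : Fin d → ℕ, (∀ i, ω i ≠ 0 → α i ≠ 0) ∧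
      (∑ i, ω i) = n ∧
      v = ∑ i ∈ Finset.univ.filter fun i => ω i ≠ 0, (α i - 1) * (ω i - 1)}) :
    I ^ n ≤ diffPow k (n + c) I :=
  pow_le_diffPow_add_general α n hn I hI c hc
end

section
/- Let R = k[x_1,...,x_d] with k a field of characteristic 0. There is no function p: N → N given by a polynomial such that I^⟨p(n)⟩ ⊆ I^n for all ideals I ⊆ R and all n ≥ 0. In fact, for any function p with p(n) ≥ 1 for all n, taking I = (x_1^{p(2)}) yields a failure of the containment I^⟨p(2)⟩ ⊆ I^2. -/
/-! A differential operator of order `n` lowers the `x`-adic order of a multiple of `x ^ (n + j)`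
by at most `n`, so `x ^ (m - 1 + c)` lies in the `m`-th differential power of `(x ^ c)`.
When `x` is prime, `x ^ (m - 1 + c) ∈ (x ^ c) ^ n = (x ^ (c * n))` forces `m - 1 + c ≥ c * n`;
for `n = 2` this fails as soon as `m ≤ c`, and `m = p 2`, `c = max (p 2) 1` gives the counterexample
for every `p`, polynomial or not. -/

section

variable {A R : Type*} [CommRing A] [CommRing R] [Algebra A R]

theorem IsDiffOp.apply_pow_add_mul_mem_span (x : R) :
    ∀ n (φ : R →ₗ[A] R), IsDiffOp A n φ → ∀ j r,
      φ (x ^ (n + j) * r) ∈ Ideal.span {x ^ j} := by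
  intro n
  induction n with
  | zero =>
    rintro φ ⟨s, rfl⟩ j r
    exact Ideal.mem_span_singleton.2 ⟨s * r, by simp only [LinearMap.mulLeft_apply]; ring⟩
  | succ n ih =>
    intro φ hφ j
    induction j with
    | zero => intro r; simp [Ideal.span_singleton_one]
    | succ j ihj =>
      intro r
      -- Leibniz: `φ (x * y) = [φ, x] y + x * φ y`, and `[φ, x]` has order `n`.
      have hcomm := ih _ (hφ x) (j + 1) r
      have hx : x * φ (x ^ (n + 1 + j) * r) ∈ Ideal.span {x ^ (j + 1)} := by
        obtain ⟨t, ht⟩ := Ideal.mem_span_singleton.1 (ihj r)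
        exact Ideal.mem_span_singleton.2 ⟨t, by rw [ht]; ring⟩
      have leibniz : φ (x ^ (n + 1 + (j + 1)) * r) =
          (φ ∘ₗ LinearMap.mulLeft A x - LinearMap.mulLeft A x ∘ₗ φ) (x ^ (n + (j + 1)) * r)
            + x * φ (x ^ (n + 1 + j) * r) := by
        simp only [LinearMap.sub_apply, LinearMap.comp_apply, LinearMap.mulLeft_apply]
        ring_nf
      rw [leibniz]
      exact Ideal.add_mem _ hcomm hx

theorem pow_mem_diffPow_span_pow (x : R) (m c : ℕ) :
    x ^ (m - 1 + c) ∈ diffPow A m (Ideal.span {x ^ c}) := fun φ hφ => by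
  simpa using IsDiffOp.apply_pow_add_mul_mem_span x (m - 1) φ hφ c 1

theorem diffPow_span_pow_not_le_pow [IsDomain R] {x : R} (hx : Prime x) {m c n : ℕ}
    (h : m - 1 + c < c * n) :
    ¬ diffPow A m (Ideal.span {x ^ c}) ≤ Ideal.span {x ^ c} ^ n := fun hle => by
  have hmem := hle (pow_mem_diffPow_span_pow x m c)
  rw [Ideal.span_singleton_pow, ← pow_mul, Ideal.mem_span_singleton,
    pow_dvd_pow_iff hx.ne_zero hx.not_isUnit] at hmem
  omega

end

theorem no_uniform_containment_general {k : Type*} [Field k] {d : ℕ} (hd : 0 < d) :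
    (¬ ∃ p : ℕ → ℕ, (∃ q : Polynomial ℕ, ∀ n, p n = q.eval n) ∧
        ∀ (I : Ideal (MvPolynomial (Fin d) k)) (n : ℕ), diffPow k (p n) I ≤ I ^ n) ∧
      ∀ p : ℕ → ℕ, (∀ n, 1 ≤ p n) →
        ¬ (diffPow k (p 2)
            (Ideal.span {(MvPolynomial.X ⟨0, hd⟩ : MvPolynomial (Fin d) k) ^ p 2}) ≤
          (Ideal.span {(MvPolynomial.X ⟨0, hd⟩ : MvPolynomial (Fin d) k) ^ p 2}) ^ 2) := by
  have hX : Prime (MvPolynomial.X ⟨0, hd⟩ : MvPolynomial (Fin d) k) := MvPolynomial.X_prime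
  refine ⟨?_, fun p hp => diffPow_span_pow_not_le_pow hX (by have := hp 2; omega)⟩
  rintro ⟨p, -, hp⟩
  exact diffPow_span_pow_not_le_pow hX (m := p 2) (c := max (p 2) 1) (n := 2) (by omega)
    (hp _ 2)

/-- There is no polynomial function `p` with `I^⟨p(n)⟩ ⊆ I^n` for all ideals `I` and
all `n`; in fact for any `p` with `p(n) ≥ 1`, taking `I = (x_1^{p(2)})` the
containment `I^⟨p(2)⟩ ⊆ I^2` fails. -/
theorem no_uniform_containment {k : Type*} [Field k] [CharZero k] {d : ℕ} (hd : 0 < d) :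
    (¬ ∃ p : ℕ → ℕ, (∃ q : Polynomial ℕ, ∀ n, p n = q.eval n) ∧
        ∀ (I : Ideal (MvPolynomial (Fin d) k)) (n : ℕ), diffPow k (p n) I ≤ I ^ n) ∧
      ∀ p : ℕ → ℕ, (∀ n, 1 ≤ p n) →
        ¬ (diffPow k (p 2)
            (Ideal.span {(MvPolynomial.X ⟨0, hd⟩ : MvPolynomial (Fin d) k) ^ p 2}) ≤
          (Ideal.span {(MvPolynomial.X ⟨0, hd⟩ : MvPolynomial (Fin d) k) ^ p 2}) ^ 2) :=
  no_uniform_containment_general hd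
end

section
/- Let R be a commutative A-algebra that is a domain and I ⊆ R an ideal. Then √I is contained in the differential closure of I: for every r with r^k ∈ I for some k > 0, the element c = r^k is nonzero (if r ≠ 0) and satisfies c·r^n ∈ I^⟨n⟩_A for all n > 0. -/
/-- The differential closure of an ideal `I` with respect to `A`: elements `r`
such that `c * r ^ n ∈ I^⟨n⟩_A` for some fixed nonzero `c` and all `n ≫ 0`. -/
def diffClosure (A : Type*) {R : Type*} [CommRing A] [CommRing R] [Algebra A R]
    (I : Ideal R) : Set R :=
  {r | ∃ c : R, c ≠ 0 ∧ ∃ N : ℕ, ∀ n : ℕ, N ≤ n → c * r ^ n ∈ diffPow A n I}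

section

variable {A R : Type*} [CommRing A] [CommRing R] [Algebra A R]

/-- Writing `φ (r * s) = [φ, r] s + r * φ s`, the commutator `[φ, r]` has order `t` and the
second term gains a factor `r`, so both induction hypotheses apply. -/
theorem IsDiffOp.pow_dvd_apply_pow_add {t : ℕ} {φ : R →ₗ[A] R} (hφ : IsDiffOp A t φ)
    (r : R) (m : ℕ) : r ^ m ∣ φ (r ^ (m + t)) := by
  induction t generalizing φ m with
  | zero =>
    obtain ⟨c, rfl⟩ := hφ
    exact Dvd.intro_left c rfl
  | succ t ih =>
    induction m with
    | zero => simp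
    | succ m ihm =>
      have hcomm : r ^ (m + 1) ∣ φ (r * r ^ (m + 1 + t)) - r * φ (r ^ (m + 1 + t)) :=
        ih (hφ r) (m + 1)
      have hmul : r ^ (m + 1) ∣ r * φ (r ^ (m + 1 + t)) := by
        rw [pow_succ', show m + 1 + t = m + (t + 1) by omega]
        exact mul_dvd_mul_left r ihm
      rw [show r ^ (m + 1 + (t + 1)) = r * r ^ (m + 1 + t) by ring]
      simpa only [sub_add_cancel] using dvd_add hcomm hmul

theorem pow_mul_pow_mem_diffPow {I : Ideal R} {r : R} {j : ℕ} (hr : r ^ j ∈ I) (n : ℕ) :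
    r ^ j * r ^ n ∈ diffPow A n I := by
  intro φ hφ
  -- `φ` has order `n - 1` (truncated), and `j + n - (n - 1) ≥ j` in all cases, including `n = 0`.
  have hdvd := hφ.pow_dvd_apply_pow_add r (j + n - (n - 1))
  rw [show j + n - (n - 1) + (n - 1) = j + n by omega] at hdvd
  rw [← pow_add]
  exact I.mem_of_dvd ((pow_dvd_pow r (by omega)).trans hdvd) hr

theorem mem_diffClosure_of_pow_mem [IsDomain R] {I : Ideal R} {r : R} {k : ℕ}
    (hr : r ^ k ∈ I) : r ∈ diffClosure A I := by
  rcases eq_or_ne r 0 with rfl | hr0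
  · refine ⟨1, one_ne_zero, 1, fun n hn => ?_⟩
    rw [zero_pow (by omega), mul_zero]
    exact Submodule.zero_mem _
  · exact ⟨r ^ k, pow_ne_zero k hr0, 0, fun n _ => pow_mul_pow_mem_diffPow hr n⟩

end

/-- The radical of `I` is contained in the differential closure of `I`: if
`r^j ∈ I` with `j > 0`, then `c = r^j` is nonzero (for `r ≠ 0`) and satisfies
`c · r^n ∈ I^⟨n⟩_A` for all `n > 0`. -/
theorem radical_subset_diffClosure {A R : Type*} [CommRing A] [CommRing R]
    [IsDomain R] [Algebra A R] (I : Ideal R) :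
    (I.radical : Set R) ⊆ diffClosure A I ∧
      ∀ r : R, ∀ j : ℕ, 0 < j → r ^ j ∈ I →
        (r ≠ 0 → r ^ j ≠ 0) ∧ ∀ n : ℕ, 0 < n → r ^ j * r ^ n ∈ diffPow A n I :=
  ⟨fun _ ⟨_, hk⟩ => mem_diffClosure_of_pow_mem hk,
    fun _ j _ hr => ⟨pow_ne_zero j, fun n _ => pow_mul_pow_mem_diffPow hr n⟩⟩
end

section
/- Let R be a commutative A-algebra and {I_α}_{α∈S} a finite family of ideals. Then the differential closure of the intersection equals the intersection of the differential closures: (∩_α I_α)^diff_A = ∩_α (I_α)^diff_A. For arbitrary (possibly infinite) S, the containment (∩_α I_α)^diff_A ⊆ ∩_α (I_α)^diff_A holds. -/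
section

variable {A R : Type*} [CommRing A] [CommRing R] [Algebra A R]

theorem diffPow_mono {n : ℕ} {I J : Ideal R} (h : I ≤ J) : diffPow A n I ≤ diffPow A n J :=
  fun _ hr φ hφ => h (hr φ hφ)

theorem diffPow_iInf {S : Type*} (n : ℕ) (I : S → Ideal R) :
    diffPow A n (⨅ s, I s) = ⨅ s, diffPow A n (I s) := by
  ext r
  simp only [Ideal.mem_iInf]
  exact ⟨fun hr s φ hφ => Ideal.mem_iInf.1 (hr φ hφ) s,
    fun hr φ hφ => Ideal.mem_iInf.2 fun s => hr s φ hφ⟩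

theorem diffClosure_mono {I J : Ideal R} (h : I ≤ J) : diffClosure A I ⊆ diffClosure A J :=
  fun _ ⟨c, hc, N, hN⟩ => ⟨c, hc, N, fun n hn => diffPow_mono h (hN n hn)⟩

/-- The product of the multipliers `c s` witnessing `r ∈ (I s)^diff` is a nonzero common
multiplier, valid from the largest of the thresholds on. -/
theorem iInter_diffClosure_subset_diffClosure_iInf [NoZeroDivisors R] [Nontrivial R]
    {S : Type*} [Finite S] (I : S → Ideal R) :
    ⋂ s, diffClosure A (I s) ⊆ diffClosure A (⨅ s, I s) := by
  have := Fintype.ofFinite S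
  intro r hr
  choose c hc N hN using Set.mem_iInter.1 hr
  refine ⟨∏ s, c s, Finset.prod_ne_zero_iff.2 fun s _ => hc s, Finset.univ.sup N,
    fun n hn => ?_⟩
  rw [diffPow_iInf, Ideal.mem_iInf]
  intro s
  have hcs : c s * r ^ n ∣ (∏ t, c t) * r ^ n :=
    mul_dvd_mul_right (Finset.dvd_prod_of_mem c (Finset.mem_univ s)) _
  exact Ideal.mem_of_dvd _ hcs (hN s n ((Finset.le_sup (Finset.mem_univ s)).trans hn))

end

/-- Differential closure and intersections: always
`(∩ I_s)^diff ⊆ ∩ (I_s)^diff`, with equality for finite families. -/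
theorem diffClosure_iInf {A R : Type*} [CommRing A] [CommRing R] [IsDomain R]
    [Algebra A R] {S : Type*} (I : S → Ideal R) :
    diffClosure A (⨅ s : S, I s) ⊆ ⋂ s : S, diffClosure A (I s) ∧
      (Finite S → diffClosure A (⨅ s : S, I s) = ⋂ s : S, diffClosure A (I s)) := by
  have hsub : diffClosure A (⨅ s, I s) ⊆ ⋂ s, diffClosure A (I s) :=
    Set.subset_iInter fun s => diffClosure_mono (iInf_le I s)
  exact ⟨hsub, fun _ => hsub.antisymm (iInter_diffClosure_subset_diffClosure_iInf I)⟩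
end
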